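/- Let n₁, …, n_C be positive integers with N = n₁ + ⋯ + n_C and 𝒩 = {n₁, …, n_C}. Let D ∈ ℝ^{d×N} and let M be a positive integer, and suppose D satisfies the block RIP of order 2M over 𝒩 with constant δ < 1; that is, there exists δ ∈ [0,1) such that (1−δ)·‖v‖₂² ≤ ‖D·v‖₂² ≤ (1+δ)·‖v‖₂² for every block 2M-sparse vector v ∈ ℝ^N over 𝒩. Then for every y ∈ ℝ^d there is at most one block M-sparse vector x ∈ ℝ^N over 𝒩 with y = D·x. -/
import Mathlib


/-- Block sparsity `‖x‖_{0,𝒩}` of a vector `x ∈ ℝ^N` indexed blockwise over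
`𝒩 = {n₁,…,n_C}` (index `⟨k, i⟩` is the `i`-th entry of the `k`-th block):
the number of blocks `k` with `x_k ≠ 0`. -/
noncomputable def blockSparsity {C : ℕ} {nk : Fin C → ℕ}
    (x : ((k : Fin C) × Fin (nk k)) → ℝ) : ℕ :=
  Nat.card {k : Fin C // (fun i : Fin (nk k) => x ⟨k, i⟩) ≠ 0}

lemma blockSparsity_sub_le {C : ℕ} {nk : Fin C → ℕ}
    (x₁ x₂ : ((k : Fin C) × Fin (nk k)) → ℝ) :
    blockSparsity (x₁ - x₂) ≤ blockSparsity x₁ + blockSparsity x₂ := by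
  unfold blockSparsity
  have e : ∀ p : Fin C → Prop, Nat.card {k // p k} = Set.ncard {k | p k} :=
    fun p => Nat.card_coe_set_eq _
  rw [e, e, e]
  calc Set.ncard {k : Fin C | (fun i : Fin (nk k) => (x₁ - x₂) ⟨k, i⟩) ≠ 0}
      ≤ Set.ncard ({k : Fin C | (fun i : Fin (nk k) => x₁ ⟨k, i⟩) ≠ 0} ∪
          {k : Fin C | (fun i : Fin (nk k) => x₂ ⟨k, i⟩) ≠ 0}) := by
        apply Set.ncard_le_ncard _ (Set.toFinite _)
        intro k hk
        by_contra hcon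
        simp only [Set.mem_union, Set.mem_setOf_eq, not_or, not_not] at hcon
        apply hk
        funext i
        have h1 := congrFun hcon.1 i
        have h2 := congrFun hcon.2 i
        simp only [Pi.zero_apply] at h1 h2 ⊢
        simp [h1, h2]
    _ ≤ _ := Set.ncard_union_le _ _

/-- If `D` satisfies the block RIP of order `2M` over `𝒩` with constant `δ < 1`,
then for every `y` there is at most one block `M`-sparse `x` with `y = D·x`. -/
theorem block_rip_unique_sparse_solution
    (d C M : ℕ) (nk : Fin C → ℕ) (hnk : ∀ k, 0 < nk k) (hM : 0 < M)
    (D : Matrix (Fin d) ((k : Fin C) × Fin (nk k)) ℝ)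
    (δ : ℝ) (hδ0 : 0 ≤ δ) (hδ1 : δ < 1)
    (hRIP : ∀ v : ((k : Fin C) × Fin (nk k)) → ℝ, blockSparsity v ≤ 2 * M →
      (1 - δ) * ∑ i, v i ^ 2 ≤ ∑ j, (D.mulVec v j) ^ 2 ∧
        ∑ j, (D.mulVec v j) ^ 2 ≤ (1 + δ) * ∑ i, v i ^ 2) :
    ∀ (y : Fin d → ℝ) (x₁ x₂ : ((k : Fin C) × Fin (nk k)) → ℝ),
      blockSparsity x₁ ≤ M → blockSparsity x₂ ≤ M →
      y = D.mulVec x₁ → y = D.mulVec x₂ → x₁ = x₂ := by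
  intro y x₁ x₂ h₁ h₂ hy₁ hy₂
  set v := x₁ - x₂ with hv
  have hsp : blockSparsity v ≤ 2 * M := by
    calc blockSparsity v ≤ blockSparsity x₁ + blockSparsity x₂ :=
          blockSparsity_sub_le x₁ x₂
      _ ≤ M + M := Nat.add_le_add h₁ h₂
      _ = 2 * M := (two_mul M).symm
  have hDv : D.mulVec v = 0 := by
    rw [hv, Matrix.mulVec_sub, ← hy₁, ← hy₂, sub_self]
  have h := (hRIP v hsp).1
  rw [hDv] at h
  norm_num at h
  have hsum : ∑ i, v i ^ 2 ≤ 0 := by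
    by_contra hcon
    push_neg at hcon
    nlinarith
  have hz : ∀ i, v i = 0 := by
    intro i
    have hnn : ∀ j ∈ Finset.univ, (0:ℝ) ≤ v j ^ 2 := fun j _ => sq_nonneg _
    have := (Finset.sum_eq_zero_iff_of_nonneg hnn).1
      (le_antisymm hsum (Finset.sum_nonneg hnn))
    exact pow_eq_zero_iff (n := 2) (by norm_num) |>.1 (this i (Finset.mem_univ i))
  have : v = 0 := funext hz
  have := sub_eq_zero.mp (hv ▸ this)
  exact this
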